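/- Fix Δx > 0, Δt > 0 and λ ∈ ℝ, and let u : ℤ × ℤ → ℝ be any grid function. Define the grid function φ = (1/3)·(μ_n((u_{-1,0})²))·(μ_n u_{-1,0}) + D_m²μ_n u_{-2,0} + λ·D_m D_n μ_m u_{-2,0}, the scheme residual Ã = D_m(μ_m φ) + D_n u_{0,0} (the EC₁₀(λ) scheme for mKdV), and the grid functions F̃₃ = (1/2)·[ φ·(S_m φ) + (D_m μ_n u_{-1,0})·(D_n μ_m u_{-1,0}) − (μ_m μ_n u_{-1,0})·(D_m D_n u_{-1,0}) + λ·(D_n u_{0,0})·(D_n u_{-1,0}) ] and G̃₃ = (1/12)·(u_{0,0})⁴ + (1/2)·u_{0,0}·(D_m² u_{-1,0}). Then the identity (S_m φ)·Ã = D_m F̃₃ + D_n G̃₃ holds at every point of ℤ × ℤ. In particular, every grid function satisfying the EC₁₀(λ) scheme Ã = 0 satisfies the discrete energy conservation law D_m F̃₃ + D_n G̃₃ = 0. -/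
import Mathlib

noncomputable section

/-- Shift operator: `(Sh i j u)(m,n) = u(m+i, n+j)`. -/
def Sh (i j : ℤ) (f : ℤ × ℤ → ℝ) : ℤ × ℤ → ℝ := fun p => f (p.1 + i, p.2 + j)

/-- Forward difference in space: `D_m f = (S_m f − f)/Δx`. -/
def Dm (dx : ℝ) (f : ℤ × ℤ → ℝ) : ℤ × ℤ → ℝ := fun p => (f (p.1 + 1, p.2) - f p) / dx

/-- Forward difference in time: `D_n f = (S_n f − f)/Δt`. -/
def Dn (dt : ℝ) (f : ℤ × ℤ → ℝ) : ℤ × ℤ → ℝ := fun p => (f (p.1, p.2 + 1) - f p) / dt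

/-- Forward average in space: `μ_m f = (S_m f + f)/2`. -/
def μm (f : ℤ × ℤ → ℝ) : ℤ × ℤ → ℝ := fun p => (f (p.1 + 1, p.2) + f p) / 2

/-- Forward average in time: `μ_n f = (S_n f + f)/2`. -/
def μn (f : ℤ × ℤ → ℝ) : ℤ × ℤ → ℝ := fun p => (f (p.1, p.2 + 1) + f p) / 2

/-- The quantity `φ` of the EC₁₀(λ) scheme. -/
def phiEC10 (dx dt lam : ℝ) (u : ℤ × ℤ → ℝ) : ℤ × ℤ → ℝ :=
  (1/3 : ℝ) • (μn ((Sh (-1) 0 u) ^ 2) * μn (Sh (-1) 0 u))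
    + Dm dx (Dm dx (μn (Sh (-2) 0 u)))
    + lam • Dm dx (Dn dt (μm (Sh (-2) 0 u)))

/-- Residual of the EC₁₀(λ) scheme: `Ã = D_m(μ_m φ) + D_n u`. -/
def resEC10 (dx dt lam : ℝ) (u : ℤ × ℤ → ℝ) : ℤ × ℤ → ℝ :=
  Dm dx (μm (phiEC10 dx dt lam u)) + Dn dt u

/-- Discrete energy flux `F̃₃` of the EC₁₀(λ) scheme. -/
def F3EC10 (dx dt lam : ℝ) (u : ℤ × ℤ → ℝ) : ℤ × ℤ → ℝ :=
  (1/2 : ℝ) • (phiEC10 dx dt lam u * Sh 1 0 (phiEC10 dx dt lam u)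
    + Dm dx (μn (Sh (-1) 0 u)) * Dn dt (μm (Sh (-1) 0 u))
    - μm (μn (Sh (-1) 0 u)) * Dm dx (Dn dt (Sh (-1) 0 u))
    + lam • (Dn dt u * Dn dt (Sh (-1) 0 u)))

/-- Discrete energy density `G̃₃` of the EC₁₀(λ) scheme. -/
def G3EC10 (dx : ℝ) (u : ℤ × ℤ → ℝ) : ℤ × ℤ → ℝ :=
  (1/12 : ℝ) • (u ^ 4) + (1/2 : ℝ) • (u * Dm dx (Dm dx (Sh (-1) 0 u)))

set_option maxHeartbeats 2000000 in
/-- The EC₁₀(λ) scheme preserves a discrete energy conservation law with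
characteristic `S_m φ`. -/
theorem EC10_energy_conservation_law (dx dt lam : ℝ) (hdx : 0 < dx) (hdt : 0 < dt)
    (u : ℤ × ℤ → ℝ) :
    (∀ p : ℤ × ℤ,
      Sh 1 0 (phiEC10 dx dt lam u) p * resEC10 dx dt lam u p
        = (Dm dx (F3EC10 dx dt lam u) + Dn dt (G3EC10 dx u)) p) ∧
    ((∀ p : ℤ × ℤ, resEC10 dx dt lam u p = 0) →
      ∀ p : ℤ × ℤ, (Dm dx (F3EC10 dx dt lam u) + Dn dt (G3EC10 dx u)) p = 0) := by
  classical
  -- Generic discrete Leibniz identity: `S_mφ · D_m(μ_mφ) = D_m(½ φ·S_mφ)`.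
  have lemA : ∀ (φ : ℤ × ℤ → ℝ) (p : ℤ × ℤ), Sh 1 0 φ p * Dm dx (μm φ) p
      = Dm dx ((1/2 : ℝ) • (φ * Sh 1 0 φ)) p := by
    intro φ p
    simp only [Sh, Dm, μm, Pi.smul_apply, Pi.mul_apply, smul_eq_mul]
    field_simp
    ring
  -- Splitting of the flux `F̃₃`.
  have hF : F3EC10 dx dt lam u
      = (1/2 : ℝ) • (phiEC10 dx dt lam u * Sh 1 0 (phiEC10 dx dt lam u))
        + (1/2 : ℝ) • (Dm dx (μn (Sh (-1) 0 u)) * Dn dt (μm (Sh (-1) 0 u))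
            - μm (μn (Sh (-1) 0 u)) * Dm dx (Dn dt (Sh (-1) 0 u))
            + lam • (Dn dt u * Dn dt (Sh (-1) 0 u))) := by
    funext q
    simp only [F3EC10, Pi.add_apply, Pi.mul_apply, Pi.sub_apply, Pi.smul_apply,
      smul_eq_mul]
    ring
  -- Additivity of `D_m` pointwise.
  have hDm : ∀ (f g : ℤ × ℤ → ℝ) (p : ℤ × ℤ),
      Dm dx (f + g) p = Dm dx f p + Dm dx g p := by
    intro f g p
    simp only [Dm, Pi.add_apply]
    ring
  -- The remaining identity, a finite algebraic computation.
  have lemB : ∀ p : ℤ × ℤ, Sh 1 0 (phiEC10 dx dt lam u) p * Dn dt u p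
      = Dm dx ((1/2 : ℝ) • (Dm dx (μn (Sh (-1) 0 u)) * Dn dt (μm (Sh (-1) 0 u))
            - μm (μn (Sh (-1) 0 u)) * Dm dx (Dn dt (Sh (-1) 0 u))
            + lam • (Dn dt u * Dn dt (Sh (-1) 0 u)))) p
        + Dn dt (G3EC10 dx u) p := by
    intro p
    obtain ⟨m, n⟩ := p
    simp only [phiEC10, G3EC10, Sh, Dm, Dn, μm, μn, Pi.add_apply, Pi.mul_apply,
      Pi.sub_apply, Pi.smul_apply, Pi.pow_apply, smul_eq_mul]
    ring_nf
  have key : ∀ p : ℤ × ℤ,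
      Sh 1 0 (phiEC10 dx dt lam u) p * resEC10 dx dt lam u p
        = (Dm dx (F3EC10 dx dt lam u) + Dn dt (G3EC10 dx u)) p := by
    intro p
    have h1 := lemA (phiEC10 dx dt lam u) p
    have h2 := lemB p
    simp only [resEC10, Pi.add_apply, hF, hDm]
    rw [mul_add, h1, h2]
    ring
  exact ⟨key, fun h p => by rw [← key p, h p, mul_zero]⟩
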